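/- With a₁ = σ, a₃ = (a₂, a₃), a₂ = (a₃⁻¹, a₂⁻¹)σ in Aut(T), set β₁ = a₁a₃a₁a₃⁻¹ and β₂ = a₃⁻¹a₁a₃a₁. Then β₁ = (a₃a₂⁻¹, a₂a₃⁻¹) and β₂ = (a₂⁻¹a₃, a₃⁻¹a₂), and the closed subgroup generated by β₁, β₂ is normal in G = ⟨⟨a₁, a₃⟩⟩ and equals the closure of the commutator subgroup of G. -/

import Mathlib

open Equiv

/-- Vertices of the infinite rooted binary tree: finite words over `Bool`.
The parent of a nonempty word is `dropLast`. -/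
abbrev Wd := List Bool

/-- The group `Ω = Aut(T)` of automorphisms of the infinite rooted binary tree,
realized as the subgroup of permutations of the vertex set preserving length
(levels) and the parent relation. -/
def OmegaSG : Subgroup (Equiv.Perm Wd) where
  carrier := {σ | (∀ w, (σ w).length = w.length) ∧ ∀ w, (σ w).dropLast = σ w.dropLast}
  one_mem' := ⟨fun _ => rfl, fun _ => rfl⟩
  mul_mem' := by
    rintro σ τ ⟨hσl, hσd⟩ ⟨hτl, hτd⟩
    refine ⟨fun w => ?_, fun w => ?_⟩
    · simp [Equiv.Perm.mul_apply, hσl, hτl]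
    · simp [Equiv.Perm.mul_apply, hσd, hτd]
  inv_mem' := by
    rintro σ ⟨hl, hd⟩
    refine ⟨fun w => ?_, fun w => ?_⟩
    · have := hl (σ⁻¹ w)
      rw [show σ (σ⁻¹ w) = w from σ.apply_symm_apply w] at this
      exact this.symm
    · apply σ.injective
      have := hd (σ⁻¹ w)
      rw [show σ (σ⁻¹ w) = w from σ.apply_symm_apply w] at this
      rw [← this]
      simp

/-- The section pairing: `(u,v)` acts as `u` on the subtree rooted at `false`
and as `v` on the subtree rooted at `true`. -/
def pairFun (f g : Wd → Wd) : Wd → Wd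
  | [] => []
  | false :: w => false :: f w
  | true :: w => true :: g w

@[simp] lemma pairFun_nil (f g : Wd → Wd) : pairFun f g [] = [] := rfl
@[simp] lemma pairFun_false (f g : Wd → Wd) (w : Wd) :
    pairFun f g (false :: w) = false :: f w := rfl
@[simp] lemma pairFun_true (f g : Wd → Wd) (w : Wd) :
    pairFun f g (true :: w) = true :: g w := rfl

lemma pairFun_comp (f g f' g' : Wd → Wd) (hf : ∀ w, f (f' w) = w) (hg : ∀ w, g (g' w) = w) :
    ∀ w, pairFun f g (pairFun f' g' w) = w := by
  rintro (_ | ⟨(_|_), w⟩) <;> simp [hf, hg]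

/-- The permutation `(u,v)` of the tree. -/
def pairPerm (u v : Equiv.Perm Wd) : Equiv.Perm Wd where
  toFun := pairFun u v
  invFun := pairFun u.symm v.symm
  left_inv := pairFun_comp _ _ _ _ (fun w => u.symm_apply_apply w) (fun w => v.symm_apply_apply w)
  right_inv := pairFun_comp _ _ _ _ (fun w => u.apply_symm_apply w) (fun w => v.apply_symm_apply w)

@[simp] lemma pairPerm_apply (u v : Equiv.Perm Wd) (w : Wd) :
    pairPerm u v w = pairFun u v w := rfl

/-- The first-level swap `σ`. -/
def swapPerm : Equiv.Perm Wd where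
  toFun w := match w with | [] => [] | b :: w => (!b) :: w
  invFun w := match w with | [] => [] | b :: w => (!b) :: w
  left_inv := by rintro (_ | ⟨b, w⟩) <;> simp
  right_inv := by rintro (_ | ⟨b, w⟩) <;> simp

@[simp] lemma swapPerm_nil : swapPerm [] = [] := rfl
@[simp] lemma swapPerm_cons (b : Bool) (w : Wd) : swapPerm (b :: w) = (!b) :: w := rfl

lemma swapPerm_mem : swapPerm ∈ OmegaSG := by
  constructor
  · rintro (_ | ⟨b, w⟩) <;> simp
  · rintro (_ | ⟨b, w⟩)
    · simp
    · rcases eq_or_ne w [] with rfl | hw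
      · simp
      · simp only [swapPerm_cons, List.dropLast_cons_of_ne_nil hw]

lemma mem_omega_length {u : Equiv.Perm Wd} (hu : u ∈ OmegaSG) (w : Wd) :
    (u w).length = w.length := hu.1 w

lemma mem_omega_ne_nil {u : Equiv.Perm Wd} (hu : u ∈ OmegaSG) {w : Wd} (hw : w ≠ []) :
    u w ≠ [] := by
  intro h
  exact hw (List.eq_nil_of_length_eq_zero (by rw [← hu.1 w, h]; rfl))

lemma mem_omega_nil {u : Equiv.Perm Wd} (hu : u ∈ OmegaSG) : u [] = [] :=
  List.eq_nil_of_length_eq_zero (hu.1 [])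

lemma pairPerm_mem {u v : Equiv.Perm Wd} (hu : u ∈ OmegaSG) (hv : v ∈ OmegaSG) :
    pairPerm u v ∈ OmegaSG := by
  constructor
  · rintro (_ | ⟨(_|_), w⟩) <;> simp [hu.1, hv.1]
  · rintro (_ | ⟨(_|_), w⟩)
    · simp
    · rcases eq_or_ne w [] with rfl | hw
      · simp [mem_omega_nil hu]
      · simp only [pairPerm_apply, pairFun_false, List.dropLast_cons_of_ne_nil hw,
          List.dropLast_cons_of_ne_nil (mem_omega_ne_nil hu hw)]
        rw [hu.2]
    · rcases eq_or_ne w [] with rfl | hw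
      · simp [mem_omega_nil hv]
      · simp only [pairPerm_apply, pairFun_true, List.dropLast_cons_of_ne_nil hw,
          List.dropLast_cons_of_ne_nil (mem_omega_ne_nil hv hw)]
        rw [hv.2]

/-- `(u,v)` as an element of `Ω`. -/
def pairOm (u v : OmegaSG) : OmegaSG := ⟨pairPerm u.1 v.1, pairPerm_mem u.2 v.2⟩

/-- `σ` as an element of `Ω`. -/
def swapOm : OmegaSG := ⟨swapPerm, swapPerm_mem⟩

/-! ### Levels, restriction, sign, odometers -/

/-- Level `n` of the tree: words of length `n`. -/
abbrev Lv (n : ℕ) := {w : Wd // w.length = n}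

instance fintypeLv (n : ℕ) : Fintype (Lv n) := by
  apply Fintype.ofSurjective (fun g : Fin n → Bool => (⟨List.ofFn g, List.length_ofFn⟩ : Lv n))
  rintro ⟨w, rfl⟩
  exact ⟨w.get, Subtype.ext (List.ofFn_get w)⟩

/-- The permutation induced by `g ∈ Ω` on level `n`. -/
def levelPerm (n : ℕ) (g : OmegaSG) : Equiv.Perm (Lv n) where
  toFun w := ⟨g.1 w.1, by rw [mem_omega_length g.2, w.2]⟩
  invFun w := ⟨(g⁻¹ : OmegaSG).1 w.1, by rw [mem_omega_length (g⁻¹ : OmegaSG).2, w.2]⟩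
  left_inv w := Subtype.ext (by simp)
  right_inv w := Subtype.ext (by simp)

/-- Restriction to level `n` as a group homomorphism. -/
def levelHom (n : ℕ) : OmegaSG →* Equiv.Perm (Lv n) where
  toFun := levelPerm n
  map_one' := Equiv.ext fun w => Subtype.ext rfl
  map_mul' g h := Equiv.ext fun w => Subtype.ext rfl

/-- `sgn_n`: the sign of the permutation induced on level `n`. -/
noncomputable def sgn (n : ℕ) (g : OmegaSG) : ℤˣ := Equiv.Perm.sign (levelPerm n g)

/-- An odometer: an element acting transitively on every level of the tree. -/
def IsOdometer (g : OmegaSG) : Prop :=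
  ∀ n : ℕ, ∀ v w : Lv n, ∃ k : ℤ, ((g ^ k : OmegaSG) : Equiv.Perm Wd) v.1 = w.1

/-! ### The profinite topology on `Aut(T)` -/

instance : TopologicalSpace Wd := ⊥
instance : DiscreteTopology Wd := ⟨rfl⟩
instance : TopologicalSpace (Equiv.Perm Wd) :=
  TopologicalSpace.induced (fun g => (g : Wd → Wd)) Pi.topologicalSpace

lemma continuous_permCoe : Continuous (fun g : Equiv.Perm Wd => (g : Wd → Wd)) :=
  continuous_induced_dom

lemma continuous_permApply (w : Wd) : Continuous fun g : Equiv.Perm Wd => g w :=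
  (continuous_apply w).comp continuous_permCoe

instance : IsTopologicalGroup (Equiv.Perm Wd) where
  continuous_mul := by
    apply continuous_induced_rng.2
    apply continuous_pi
    intro w
    rw [continuous_discrete_rng]
    intro y
    have h : (fun p : Equiv.Perm Wd × Equiv.Perm Wd => ((p.1 * p.2 : Equiv.Perm Wd) : Wd → Wd) w) ⁻¹' {y}
        = ⋃ x : Wd, {p : Equiv.Perm Wd × Equiv.Perm Wd | p.2 w = x} ∩ {p | p.1 x = y} := by
      ext p
      simp only [Set.mem_preimage, Set.mem_singleton_iff, Set.mem_iUnion, Set.mem_inter_iff,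
        Set.mem_setOf_eq, Equiv.Perm.mul_apply]
      constructor
      · intro hh; exact ⟨p.2 w, rfl, hh⟩
      · rintro ⟨x, rfl, hh⟩; exact hh
    show IsOpen ((fun p : Equiv.Perm Wd × Equiv.Perm Wd =>
      ((p.1 * p.2 : Equiv.Perm Wd) : Wd → Wd) w) ⁻¹' {y})
    rw [h]
    refine isOpen_iUnion fun x => IsOpen.inter ?_ ?_
    · exact IsOpen.preimage ((continuous_permApply w).comp continuous_snd) (isOpen_discrete {x})
    · exact IsOpen.preimage ((continuous_permApply x).comp continuous_fst) (isOpen_discrete {y})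
  continuous_inv := by
    apply continuous_induced_rng.2
    apply continuous_pi
    intro w
    rw [continuous_discrete_rng]
    intro y
    have h : (fun g : Equiv.Perm Wd => ((g⁻¹ : Equiv.Perm Wd) : Wd → Wd) w) ⁻¹' {y}
        = {g : Equiv.Perm Wd | g y = w} := by
      ext g
      simp only [Set.mem_preimage, Set.mem_singleton_iff, Set.mem_setOf_eq]
      constructor
      · rintro rfl; simp
      · intro hh; rw [← hh]; simp
    show IsOpen ((fun g : Equiv.Perm Wd => ((g⁻¹ : Equiv.Perm Wd) : Wd → Wd) w) ⁻¹' {y})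
    rw [h]
    exact IsOpen.preimage (continuous_permApply y) (isOpen_discrete {w})

/-! ### The recursive generators `a₁ = σ`, `a₂ = (a₃⁻¹, a₂⁻¹)σ`, `a₃ = (a₂, a₃)` -/

mutual
  /-- The underlying function of `a₂`. -/
  def pA : Wd → Wd
    | [] => []
    | false :: w => true :: piA w
    | true :: w => false :: qiA w
  /-- The underlying function of `a₃`. -/
  def qA : Wd → Wd
    | [] => []
    | false :: w => false :: pA w
    | true :: w => true :: qA w
  /-- The underlying function of `a₂⁻¹`. -/
  def piA : Wd → Wd
    | [] => []
    | false :: w => true :: qA w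
    | true :: w => false :: pA w
  /-- The underlying function of `a₃⁻¹`. -/
  def qiA : Wd → Wd
    | [] => []
    | false :: w => false :: piA w
    | true :: w => true :: qiA w
end

lemma a_inv_lemma : ∀ w : Wd, pA (piA w) = w ∧ piA (pA w) = w ∧ qA (qiA w) = w ∧ qiA (qA w) = w := by
  intro w
  induction w with
  | nil => simp [pA, qA, piA, qiA]
  | cons b w ih =>
    cases b <;>
      simp [pA, qA, piA, qiA, ih.1, ih.2.1, ih.2.2.1, ih.2.2.2]

/-- The generator `a₂`. -/
def a2 : Equiv.Perm Wd where
  toFun := pA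
  invFun := piA
  left_inv w := (a_inv_lemma w).2.1
  right_inv w := (a_inv_lemma w).1

/-- The generator `a₃`. -/
def a3 : Equiv.Perm Wd where
  toFun := qA
  invFun := qiA
  left_inv w := (a_inv_lemma w).2.2.2
  right_inv w := (a_inv_lemma w).2.2.1

lemma a_length_lemma : ∀ w : Wd, (pA w).length = w.length ∧ (qA w).length = w.length ∧
    (piA w).length = w.length ∧ (qiA w).length = w.length := by
  intro w
  induction w with
  | nil => simp [pA, qA, piA, qiA]
  | cons b w ih =>
    cases b <;>
      simp [pA, qA, piA, qiA, ih.1, ih.2.1, ih.2.2.1, ih.2.2.2]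

lemma a_ne_nil {f : Wd → Wd} (hf : ∀ w : Wd, (f w).length = w.length) {w : Wd} (hw : w ≠ []) :
    f w ≠ [] := by
  intro h
  exact hw (List.eq_nil_of_length_eq_zero (by rw [← hf w, h]; rfl))

lemma a_dropLast_lemma : ∀ w : Wd, (pA w).dropLast = pA w.dropLast ∧
    (qA w).dropLast = qA w.dropLast ∧ (piA w).dropLast = piA w.dropLast ∧
    (qiA w).dropLast = qiA w.dropLast := by
  intro w
  induction w with
  | nil => simp [pA, qA, piA, qiA]
  | cons b w ih =>
    rcases eq_or_ne w [] with rfl | hw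
    · cases b <;> simp [pA, qA, piA, qiA]
    · have hp := a_ne_nil (fun w => (a_length_lemma w).1) hw
      have hq := a_ne_nil (fun w => (a_length_lemma w).2.1) hw
      have hpi := a_ne_nil (fun w => (a_length_lemma w).2.2.1) hw
      have hqi := a_ne_nil (fun w => (a_length_lemma w).2.2.2) hw
      cases b <;>
        simp [pA, qA, piA, qiA, List.dropLast_cons_of_ne_nil hw,
          List.dropLast_cons_of_ne_nil hp, List.dropLast_cons_of_ne_nil hq,
          List.dropLast_cons_of_ne_nil hpi, List.dropLast_cons_of_ne_nil hqi,
          ih.1, ih.2.1, ih.2.2.1, ih.2.2.2]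

lemma a2_mem : a2 ∈ OmegaSG :=
  ⟨fun w => (a_length_lemma w).1, fun w => (a_dropLast_lemma w).1⟩

lemma a3_mem : a3 ∈ OmegaSG :=
  ⟨fun w => (a_length_lemma w).2.1, fun w => (a_dropLast_lemma w).2.1⟩

/-- `a₁ = σ` as an element of `Ω`. -/
def A1 : OmegaSG := swapOm
/-- `a₂` as an element of `Ω`. -/
def A2 : OmegaSG := ⟨a2, a2_mem⟩
/-- `a₃` as an element of `Ω`. -/
def A3 : OmegaSG := ⟨a3, a3_mem⟩

/-- `G = ⟨⟨a₁, a₃⟩⟩`, the topological closure of the subgroup generated by `a₁` and `a₃`: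
a model of the geometric iterated monodromy group of `f(x) = 2/(x-1)²`. -/
noncomputable def Ggrp : Subgroup OmegaSG :=
  (Subgroup.closure {A1, A3}).topologicalClosure

/-- The normal closure in `G` of the closed subgroup generated by an element `c`:
the closed subgroup generated by all `G`-conjugates of `c`. -/
noncomputable def nclG (c : OmegaSG) : Subgroup OmegaSG :=
  (Subgroup.closure {x | ∃ g ∈ Ggrp, x = g * c * g⁻¹}).topologicalClosure

/-- `U`, the normal closure in `G` of `⟨⟨a₂a₃⁻¹⟩⟩`. -/
noncomputable def Ugrp : Subgroup OmegaSG := nclG (A2 * A3⁻¹)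

/-- `H₁`, the normal closure in `G` of `⟨⟨a₁⟩⟩`. -/
noncomputable def H1grp : Subgroup OmegaSG := nclG A1

/-- `H₃`, the normal closure in `G` of `⟨⟨a₃⟩⟩`. -/
noncomputable def H3grp : Subgroup OmegaSG := nclG A3

/-- `N = ⟨⟨β₁, β₂⟩⟩` where `β₁ = a₁a₃a₁a₃⁻¹` and `β₂ = a₃⁻¹a₁a₃a₁`. -/
noncomputable def Ngrp : Subgroup OmegaSG :=
  (Subgroup.closure {A1 * A3 * A1 * A3⁻¹, A3⁻¹ * A1 * A3 * A1}).topologicalClosure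

/-! Over the dense subgroup `H = ⟨a₁, a₃⟩` the argument is pure group theory. The relations
`a₁² = a₃⁴ = 1` and `(a₃a₁)² = (a₁a₃⁻¹)²` make conjugation by `a₁` and `a₃` permute
`β₁^{±1}, β₂^{±1}`, so `⟨β₁, β₂⟩` is normalized by `H`; since `β₁ = [a₁, a₃]` and
`β₂ = [a₃⁻¹, a₁]`, and `H` modulo `⟨β₁, β₂⟩` is generated by two commuting elements,
`⟨β₁, β₂⟩ = [H, H]`. Conjugation and the commutator map are continuous, so both facts pass
to closures: `G = H̄` normalizes `N = ⟨β₁, β₂⟩‾`, and `[H̄, H̄]‾ = [H, H]‾ = N`. -/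

open Subgroup
open scoped commutatorElement

namespace Subgroup

section Normalizer

variable {G : Type*} [Group G]

theorem mem_normalizer_closure_of_conj_mem {s : Set G} {g : G}
    (hg : ∀ x ∈ s, g * x * g⁻¹ ∈ closure s) (hg' : ∀ x ∈ s, g⁻¹ * x * g ∈ closure s) :
    g ∈ normalizer (closure s : Set G) := by
  have hconj : ∀ {h : G}, (∀ x ∈ s, h * x * h⁻¹ ∈ closure s) →
      ∀ x ∈ closure s, h * x * h⁻¹ ∈ closure s := fun {h} hh x hx =>
    closure_le ((closure s).comap (MulAut.conj h).toMonoidHom) |>.mpr hh hx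
  refine mem_normalizer_iff.mpr fun x => ⟨hconj hg x, fun hx => ?_⟩
  simpa [mul_assoc] using hconj (h := g⁻¹) (by simpa using hg') _ hx

theorem commutator_closure_le {s : Set G} {K : Subgroup G}
    (hK : closure s ≤ normalizer (K : Set G)) (hs : ∀ x ∈ s, ∀ y ∈ s, ⁅x, y⁆ ∈ K) :
    ⁅closure s, closure s⁆ ≤ K := by
  have hconj : ∀ x ∈ closure s, ∀ k ∈ K, x * k * x⁻¹ ∈ K := le_normalizer_iff.mp hK
  refine commutator_le.mpr fun x hx y hy => ?_
  induction hx, hy using closure_induction₂ with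
  | mem x y hx hy => exact hs x hx y hy
  | one_left x _ => simp
  | one_right x _ => simp
  | mul_left x y z hx _ _ hxz hyz =>
    rw [commutatorElement_mul_left_eq_conj_mul]
    exact mul_mem (hconj x hx _ hyz) hxz
  | mul_right y z x hy _ _ hxy hxz =>
    rw [commutatorElement_mul_right_eq_mul_conj, mul_assoc _ y, mul_assoc]
    exact mul_mem hxy (hconj y hy _ hxz)
  | inv_left x y hx _ hxy =>
    rw [commutatorElement_inv_left, ← commutatorElement_inv]
    simpa using hconj x⁻¹ (inv_mem hx) _ (inv_mem hxy)
  | inv_right x y _ hy hxy =>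
    rw [commutatorElement_inv_right, ← commutatorElement_inv]
    simpa using hconj y⁻¹ (inv_mem hy) _ (inv_mem hxy)

end Normalizer

section TopologicalClosure

variable {G : Type*} [Group G] [TopologicalSpace G] [IsTopologicalGroup G]

theorem topologicalClosure_le_normalizer {H K : Subgroup G}
    (h : H ≤ normalizer (K : Set G)) :
    H.topologicalClosure ≤ normalizer (K.topologicalClosure : Set G) :=
  le_normalizer_iff.mpr fun _ hg _ hk =>
    map_mem_closure₂ (f := fun g k => g * k * g⁻¹) (by fun_prop) hg hk (le_normalizer_iff.mp h)

theorem topologicalClosure_commutator_topologicalClosure (H₁ H₂ : Subgroup G) :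
    ⁅H₁.topologicalClosure, H₂.topologicalClosure⁆.topologicalClosure =
      ⁅H₁, H₂⁆.topologicalClosure := by
  refine le_antisymm (topologicalClosure_minimal _ ?_ isClosed_closure) <|
    topologicalClosure_mono <| commutator_mono (le_topologicalClosure H₁) (le_topologicalClosure H₂)
  exact commutator_le.mpr fun _ hg _ hk =>
    map_mem_closure₂ (f := fun g k => g * k * g⁻¹ * k⁻¹) (by fun_prop) hg hk
      fun x hx y hy => commutator_mem_commutator hx hy

end TopologicalClosure

end Subgroup

section Relations

variable {G : Type*} [Group G] {a b : G}

theorem conj_mul_mul_mul_inv_of_inv_eq_self (ha : a⁻¹ = a) :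
    a * (a * b * a * b⁻¹) * a⁻¹ = (a * b * a * b⁻¹)⁻¹ :=
  calc a * (a * b * a * b⁻¹) * a⁻¹ = a⁻¹ * (a * b * a * b⁻¹) * a⁻¹ := by rw [ha]
    _ = b * a * b⁻¹ * a⁻¹ := by group
    _ = b * a⁻¹ * b⁻¹ * a⁻¹ := by rw [ha]
    _ = (a * b * a * b⁻¹)⁻¹ := by group

theorem conj_inv_mul_mul_mul_of_inv_eq_self (ha : a⁻¹ = a) :
    a * (b⁻¹ * a * b * a) * a⁻¹ = (b⁻¹ * a * b * a)⁻¹ :=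
  calc a * (b⁻¹ * a * b * a) * a⁻¹ = a * b⁻¹ * a * b := by group
    _ = a⁻¹ * b⁻¹ * a⁻¹ * b := by rw [ha]
    _ = (b⁻¹ * a * b * a)⁻¹ := by group

theorem inv_conj_inv_mul_mul_mul (ha : a⁻¹ = a) (hb : b ^ 4 = 1)
    (hab : (b * a) ^ 2 = (a * b⁻¹) ^ 2) :
    b⁻¹ * (b⁻¹ * a * b * a) * b = (a * b * a * b⁻¹)⁻¹ := by
  have hb' : b⁻¹ ^ 3 = b := by
    rw [inv_pow, inv_eq_of_mul_eq_one_left]; rw [← pow_succ', hb]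
  rw [sq, sq] at hab
  calc b⁻¹ * (b⁻¹ * a * b * a) * b = b⁻¹ ^ 3 * (b * a * (b * a)) * b := by group
    _ = b⁻¹ ^ 3 * (a * b⁻¹ * (a * b⁻¹)) * b := by rw [hab]
    _ = b * a * b⁻¹ * a := by rw [hb']; group
    _ = b * a⁻¹ * b⁻¹ * a⁻¹ := by rw [ha]
    _ = (a * b * a * b⁻¹)⁻¹ := by group

theorem conj_mul_mul_mul_inv (ha : a⁻¹ = a) (hb : b ^ 4 = 1)
    (hab : (b * a) ^ 2 = (a * b⁻¹) ^ 2) :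
    b * (a * b * a * b⁻¹) * b⁻¹ = (b⁻¹ * a * b * a)⁻¹ := by
  rw [← inv_inv (a * b * a * b⁻¹), ← inv_conj_inv_mul_mul_mul ha hb hab]
  group

theorem closure_pair_le_normalizer (ha : a ^ 2 = 1) (hb : b ^ 4 = 1)
    (hab : (b * a) ^ 2 = (a * b⁻¹) ^ 2) :
    closure {a, b} ≤ normalizer (closure {a * b * a * b⁻¹, b⁻¹ * a * b * a} : Set G) := by
  have ha' : a⁻¹ = a := inv_eq_of_mul_eq_one_right ((sq a).symm.trans ha)
  have mem₁ : a * b * a * b⁻¹ ∈ closure {a * b * a * b⁻¹, b⁻¹ * a * b * a} :=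
    subset_closure (by simp)
  have mem₂ : b⁻¹ * a * b * a ∈ closure {a * b * a * b⁻¹, b⁻¹ * a * b * a} :=
    subset_closure (by simp)
  simp only [closure_le, Set.insert_subset_iff, Set.singleton_subset_iff, SetLike.mem_coe]
  constructor
  · have hconj : ∀ x ∈ ({a * b * a * b⁻¹, b⁻¹ * a * b * a} : Set G),
        a * x * a⁻¹ ∈ closure {a * b * a * b⁻¹, b⁻¹ * a * b * a} := by
      simp only [Set.forall_mem_insert, Set.mem_singleton_iff, forall_eq]
      rw [conj_mul_mul_mul_inv_of_inv_eq_self ha', conj_inv_mul_mul_mul_of_inv_eq_self ha']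
      exact ⟨inv_mem mem₁, inv_mem mem₂⟩
    exact mem_normalizer_closure_of_conj_mem hconj (by simpa only [ha', inv_inv] using hconj)
  · refine mem_normalizer_closure_of_conj_mem ?_ ?_ <;>
      simp only [Set.forall_mem_insert, Set.mem_singleton_iff, forall_eq]
    · rw [conj_mul_mul_mul_inv ha' hb hab]
      exact ⟨inv_mem mem₂, by simpa [mul_assoc] using mem₁⟩
    · rw [inv_conj_inv_mul_mul_mul ha' hb hab]
      exact ⟨by simpa [mul_assoc] using mem₂, inv_mem mem₁⟩

theorem closure_eq_commutator_closure_pair (ha : a ^ 2 = 1) (hb : b ^ 4 = 1)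
    (hab : (b * a) ^ 2 = (a * b⁻¹) ^ 2) :
    closure {a * b * a * b⁻¹, b⁻¹ * a * b * a} = ⁅closure {a, b}, closure {a, b}⁆ := by
  have ha' : a⁻¹ = a := inv_eq_of_mul_eq_one_right ((sq a).symm.trans ha)
  have ha_mem : a ∈ closure {a, b} := subset_closure (by simp)
  have hb_mem : b ∈ closure {a, b} := subset_closure (by simp)
  have hβ₁ : a * b * a * b⁻¹ = ⁅a, b⁆ := by rw [commutatorElement_def, ha']
  have hβ₂ : b⁻¹ * a * b * a = ⁅b⁻¹, a⁆ := by rw [commutatorElement_def, inv_inv, ha']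
  have mem₁ : ⁅a, b⁆ ∈ closure {a * b * a * b⁻¹, b⁻¹ * a * b * a} :=
    subset_closure (by simp [hβ₁])
  refine le_antisymm ?_ (commutator_closure_le (closure_pair_le_normalizer ha hb hab) ?_)
  · simp only [closure_le, Set.insert_subset_iff, Set.singleton_subset_iff, SetLike.mem_coe]
    rw [hβ₁, hβ₂]
    exact ⟨commutator_mem_commutator ha_mem hb_mem,
      commutator_mem_commutator (inv_mem hb_mem) ha_mem⟩
  · simp only [Set.forall_mem_insert, Set.mem_singleton_iff, forall_eq, commutatorElement_self]
    rw [← commutatorElement_inv a b]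
    exact ⟨⟨one_mem _, mem₁⟩, inv_mem mem₁, one_mem _⟩

end Relations

section Generators

theorem pA_piA (w : Wd) : pA (piA w) = w := (a_inv_lemma w).1
theorem piA_pA (w : Wd) : piA (pA w) = w := (a_inv_lemma w).2.1
theorem qA_qiA (w : Wd) : qA (qiA w) = w := (a_inv_lemma w).2.2.1
theorem qiA_qA (w : Wd) : qiA (qA w) = w := (a_inv_lemma w).2.2.2

theorem qiA_piA_qiA_piA (w : Wd) : qiA (piA (qiA (piA w))) = w := by
  rcases w with _ | ⟨_ | _, w⟩ <;> simp [piA, qiA, piA_pA, qiA_qA]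

theorem piA_qiA_piA_qiA (w : Wd) : piA (qiA (piA (qiA w))) = w := by
  rcases w with _ | ⟨_ | _, w⟩ <;> simp [piA, qiA, pA_piA, piA_pA, qA_qiA, qiA_qA]

/-- `a₂² = (a₃⁻¹a₂⁻¹, a₂⁻¹a₃⁻¹)`, and both sections are involutions. -/
theorem pA_pA_pA_pA (w : Wd) : pA (pA (pA (pA w))) = w := by
  rcases w with _ | ⟨_ | _, w⟩ <;> simp [pA, qiA_piA_qiA_piA, piA_qiA_piA_qiA]

theorem qA_qA_qA_qA (w : Wd) : qA (qA (qA (qA w))) = w := by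
  induction w with
  | nil => rfl
  | cons b w ih => cases b <;> simp [qA, pA_pA_pA_pA, ih]

theorem A1_sq : A1 ^ 2 = 1 :=
  Subtype.ext <| Equiv.ext fun w => by rcases w with _ | ⟨_ | _, w⟩ <;> rfl

theorem A3_pow_four : A3 ^ 4 = 1 :=
  Subtype.ext <| Equiv.ext qA_qA_qA_qA

theorem A3_mul_A1_sq : (A3 * A1) ^ 2 = (A1 * A3⁻¹) ^ 2 :=
  Subtype.ext <| Equiv.ext fun w => by
    rcases w with _ | ⟨_ | _, _ | ⟨_ | _, w⟩⟩ <;>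
      simp [sq, Equiv.Perm.mul_apply, A1, A3, a3, swapOm, pA, qA, piA, qiA,
        piA_pA, qiA_qA]

end Generators

/-- `β₁ = (a₃a₂⁻¹, a₂a₃⁻¹)`, `β₂ = (a₂⁻¹a₃, a₃⁻¹a₂)`, and the
closed subgroup `N = ⟨⟨β₁,β₂⟩⟩` is a normal subgroup of `G = ⟨⟨a₁,a₃⟩⟩` equal to the
closure of the commutator subgroup of `G`. -/
theorem stmt6 :
    A1 * A3 * A1 * A3⁻¹ = pairOm (A3 * A2⁻¹) (A2 * A3⁻¹) ∧
    A3⁻¹ * A1 * A3 * A1 = pairOm (A2⁻¹ * A3) (A3⁻¹ * A2) ∧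
    Ngrp ≤ Ggrp ∧
    (∀ g ∈ Ggrp, ∀ x ∈ Ngrp, g * x * g⁻¹ ∈ Ngrp) ∧
    Ngrp = (⁅Ggrp, Ggrp⁆).topologicalClosure := by
  have hN : Ngrp = ⁅Subgroup.closure {A1, A3}, Subgroup.closure {A1, A3}⁆.topologicalClosure :=
    congrArg topologicalClosure (closure_eq_commutator_closure_pair A1_sq A3_pow_four A3_mul_A1_sq)
  refine ⟨?_, ?_, ?_, ?_, ?_⟩
  · exact Subtype.ext <| Equiv.ext fun w => by rcases w with _ | ⟨_ | _, w⟩ <;> rfl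
  · exact Subtype.ext <| Equiv.ext fun w => by rcases w with _ | ⟨_ | _, w⟩ <;> rfl
  · rw [hN]
    exact topologicalClosure_mono (commutator_le_self _)
  · exact le_normalizer_iff.mp <| topologicalClosure_le_normalizer <|
      closure_pair_le_normalizer A1_sq A3_pow_four A3_mul_A1_sq
  · rw [hN, Ggrp, topologicalClosure_commutator_topologicalClosure]
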